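/- Let u = Σ_{i=0}^m α_i ℓ'_i where ℓ'_i = (ℓ_i − ℓ_{i+1})/2 for i < m and ℓ'_m = (ℓ_0 + ℓ_m)/2. Then u is ℓ-positive (i.e., u = Σ a_i ℓ_i with a_1,…,a_m > 0) if and only if α_0 < α_1 < … < α_m. -/

import Mathlib

open Finset

/-- The value λ(k) for λ ∈ Λ = {0,1}^m, extended by the conventions λ(0) = 0 and
λ(m+1) = 1 (positions 1,…,m carry the actual values of λ). -/
def lamExt (m : ℕ) (lam : Fin m → Bool) (k : ℕ) : ℕ :=
  if h : 1 ≤ k ∧ k ≤ m then (if lam ⟨k - 1, by omega⟩ then 1 else 0)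
  else if k = 0 then 0 else 1

/-- The vector ℓ_i ∈ ℝ^Λ, ℓ_i(λ) = (−1)^{λ(i)}, for 0 ≤ i ≤ m. -/
def ell (m : ℕ) (i : ℕ) (lam : Fin m → Bool) : ℝ := (-1) ^ lamExt m lam i

/-- ℓ'_i = (ℓ_i − ℓ_{i+1})/2 for 0 ≤ i ≤ m−1 and ℓ'_m = (ℓ_0 + ℓ_m)/2. -/
noncomputable def ell' (m : ℕ) (i : ℕ) (lam : Fin m → Bool) : ℝ :=
  if i < m then (ell m i lam - ell m (i + 1) lam) / 2
  else (ell m 0 lam + ell m m lam) / 2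

/-- u is ℓ-positive if u = Σ_{i=0}^m a_i ℓ_i with a_1,…,a_m > 0. -/
def lpos (m : ℕ) (u : (Fin m → Bool) → ℝ) : Prop :=
  ∃ a : ℕ → ℝ, (∀ i ∈ Finset.Icc 1 m, 0 < a i) ∧
    u = fun lam => ∑ i ∈ Finset.range (m + 1), a i * ell m i lam

/-!
Abel summation rewrites `∑ αᵢ ℓ'ᵢ` in the ℓ-basis with coefficients `(αᵢ - αᵢ₋₁)/2` for
`i ≥ 1`. These coefficients are determined by the function, since evaluating at the all-zero
`λ` and at the indicator of position `j` isolates `2 aⱼ`.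
-/

/-- The coefficients of `∑ αᵢ ℓ'ᵢ` in the ℓ-basis. -/
noncomputable def ellCoeff (m : ℕ) (α : ℕ → ℝ) (i : ℕ) : ℝ :=
  if i = 0 then (α 0 + α m) / 2 else (α i - α (i - 1)) / 2

lemma ellCoeff_succ (m : ℕ) (α : ℕ → ℝ) (i : ℕ) :
    ellCoeff m α (i + 1) = (α (i + 1) - α i) / 2 := by
  simp [ellCoeff]

lemma ell_const_false {m i : ℕ} (hi : i ≤ m) : ell m i (fun _ => false) = 1 := by
  unfold ell lamExt
  by_cases h : 1 ≤ i ∧ i ≤ m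
  · simp [h]
  · simp [show i = 0 by omega]

lemma ell_indicator {m i j : ℕ} (hj : 1 ≤ j) (hi : i ≤ m) :
    ell m i (fun k => decide (k.1 + 1 = j)) = if i = j then -1 else 1 := by
  unfold ell lamExt
  by_cases h : 1 ≤ i ∧ i ≤ m
  · simp only [dif_pos h, show i - 1 + 1 = i by omega]
    by_cases hij : i = j <;> simp [hij]
  · obtain rfl : i = 0 := by omega
    simp [show 0 ≠ j by omega]

lemma sum_mul_ell_const_false_sub_sum_mul_ell_indicator (c : ℕ → ℝ) {m j : ℕ}
    (hj : 1 ≤ j) (hjm : j ≤ m) :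
    ∑ i ∈ range (m + 1), c i * ell m i (fun _ => false)
      - ∑ i ∈ range (m + 1), c i * ell m i (fun k => decide (k.1 + 1 = j)) = 2 * c j := by
  rw [← sum_sub_distrib, sum_eq_single j]
  · rw [ell_const_false hjm, ell_indicator hj hjm, if_pos rfl]
    ring
  · intro i hi hij
    have him : i ≤ m := Nat.lt_succ_iff.mp (mem_range.mp hi)
    rw [ell_const_false him, ell_indicator hj him, if_neg hij]
    ring
  · exact fun h => absurd (mem_range.mpr (by omega)) h

lemma coeff_eq_of_sum_mul_ell_eq {m : ℕ} {a b : ℕ → ℝ}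
    (h : (fun lam => ∑ i ∈ range (m + 1), a i * ell m i lam)
      = fun lam => ∑ i ∈ range (m + 1), b i * ell m i lam)
    {j : ℕ} (hj : 1 ≤ j) (hjm : j ≤ m) : a j = b j := by
  have h2 := sum_mul_ell_const_false_sub_sum_mul_ell_indicator a hj hjm
  rw [congrFun h, congrFun h, sum_mul_ell_const_false_sub_sum_mul_ell_indicator b hj hjm] at h2
  linarith

lemma sum_mul_half_sub_succ (α f : ℕ → ℝ) (n : ℕ) :
    ∑ i ∈ range n, α i * ((f i - f (i + 1)) / 2)
      = ∑ i ∈ range n, (α (i + 1) - α i) / 2 * f (i + 1) + (α 0 * f 0 - α n * f n) / 2 := by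
  induction n with
  | zero => simp
  | succ n ih => rw [sum_range_succ, sum_range_succ, ih]; ring

lemma sum_mul_ell'_eq_sum_ellCoeff_mul_ell (m : ℕ) (α : ℕ → ℝ) (lam : Fin m → Bool) :
    ∑ i ∈ range (m + 1), α i * ell' m i lam
      = ∑ i ∈ range (m + 1), ellCoeff m α i * ell m i lam := by
  have h_lt : ∑ i ∈ range m, α i * ell' m i lam
      = ∑ i ∈ range m, α i * ((ell m i lam - ell m (i + 1) lam) / 2) :=
    sum_congr rfl fun i hi => by rw [ell', if_pos (mem_range.mp hi)]
  have h_succ : ∑ i ∈ range m, ellCoeff m α (i + 1) * ell m (i + 1) lam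
      = ∑ i ∈ range m, (α (i + 1) - α i) / 2 * ell m (i + 1) lam :=
    sum_congr rfl fun i _ => by rw [ellCoeff_succ]
  rw [sum_range_succ, sum_range_succ' _ m, h_lt, h_succ,
    sum_mul_half_sub_succ α (fun i => ell m i lam) m, ell', if_neg (lt_irrefl m), ellCoeff,
    if_pos rfl]
  ring

theorem stmt14_general (m : ℕ) (α : ℕ → ℝ) :
    lpos m (fun lam => ∑ i ∈ Finset.range (m + 1), α i * ell' m i lam) ↔
      ∀ i < m, α i < α (i + 1) := by
  simp_rw [sum_mul_ell'_eq_sum_ellCoeff_mul_ell]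
  constructor
  · rintro ⟨b, hb, hu⟩ i hi
    have hcoeff := coeff_eq_of_sum_mul_ell_eq hu (j := i + 1) (by omega) hi
    have hpos := hb (i + 1) (mem_Icc.mpr ⟨by omega, hi⟩)
    rw [ellCoeff_succ] at hcoeff
    linarith
  · intro hmono
    refine ⟨ellCoeff m α, fun i hi => ?_, rfl⟩
    obtain ⟨k, rfl⟩ : ∃ k, i = k + 1 := ⟨i - 1, by have := (mem_Icc.mp hi).1; omega⟩
    rw [ellCoeff_succ]
    linarith [hmono k (by have := (mem_Icc.mp hi).2; omega)]

/-- u = Σ_{i=0}^m α_i ℓ'_i is ℓ-positive iff α_0 < α_1 < … < α_m. -/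
theorem stmt14 (m : ℕ) (hm : 1 ≤ m) (α : ℕ → ℝ) :
    lpos m (fun lam => ∑ i ∈ Finset.range (m + 1), α i * ell' m i lam) ↔
      ∀ i < m, α i < α (i + 1) :=
  stmt14_general m α
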